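/- Let x = (x_{ij}) be an n×n matrix and 1 ≤ m ≤ n. Let x*_1 ≥ x*_2 ≥ ... ≥ x*_{n²} be the decreasing rearrangement of the absolute values of all entries. Then there is an absolute constant c > 0 (independent of n, m, x) such that c^{-1}·(1/n)·Σ_{k=1}^{nm} x*_k ≤ (1/n!)·Σ_{π ∈ S_n} (sum of the m largest values among |x_{1,π(1)}|,...,|x_{n,π(n)}|) ≤ c·(1/n)·Σ_{k=1}^{nm} x*_k. -/

import Mathlib

open scoped Classical

/-- Sum of the `m` largest entries of a vector. -/
noncomputable def sumLargest {ι : Type*} [Fintype ι] (v : ι → ℝ) (m : ℕ) : ℝ :=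
  sSup ((fun I : Finset ι => ∑ i ∈ I, v i) '' {I | I.card = m})

/-!
Let `T` be a set of `n m` cells carrying the largest entries, of total `S`. A uniformly random
permutation `σ` passes through each cell with probability `1/n`, so the part `a σ` of its diagonal
lying in `T` has mean `S/n`. Every cell outside `T` carries at most `S/(n m)`, hence the sum `X σ`
of the `m` largest diagonal entries is at most `a σ + S/n`: this is the upper bound, with
constant `2`.

For the lower bound let `u σ` be the number of cells of `T` on the diagonal of `σ`. Averaging gives
`m a ≤ (u + m) X`. Two distinct cells lie on the diagonal of a common permutation with probability
at most `2/n²`, so the second moment `E[a u]` is at most `(1 + 2m) S/n`. Summing the AM-GM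
consequence `8 m a ≤ a (u + m) + 16 m X` over `σ` yields `S/n ≤ 4 E[X]`.
-/

open Finset Equiv Fintype
open scoped Nat

section Exchange

variable {ι : Type*} {w : ι → ℝ} {A I : Finset ι}

lemma apply_le_of_forall_sum_le (hIA : I ⊆ A)
    (hmax : ∀ J ⊆ A, #J = #I → ∑ j ∈ J, w j ≤ ∑ i ∈ I, w i) {i j : ι} (hi : i ∈ I)
    (hjA : j ∈ A) (hjI : j ∉ I) : w j ≤ w i := by
  have hj : j ∉ I.erase i := fun h => hjI (mem_of_mem_erase h)
  have h := hmax (insert j (I.erase i)) (insert_subset hjA ((erase_subset i I).trans hIA))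
    (by rw [card_insert_of_notMem hj, card_erase_add_one hi])
  rw [sum_insert hj, sum_erase_eq_sub hi] at h
  linarith

lemma card_mul_le_sum_of_forall_sum_le (hIA : I ⊆ A)
    (hmax : ∀ J ⊆ A, #J = #I → ∑ j ∈ J, w j ≤ ∑ i ∈ I, w i) {j : ι} (hjA : j ∈ A)
    (hjI : j ∉ I) : #I * w j ≤ ∑ i ∈ I, w i :=
  calc (#I : ℝ) * w j = ∑ _i ∈ I, w j := by rw [sum_const, nsmul_eq_mul]
    _ ≤ ∑ i ∈ I, w i := sum_le_sum fun i hi => apply_le_of_forall_sum_le hIA hmax hi hjA hjI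

lemma card_mul_sum_le_of_forall_sum_le (hIA : I ⊆ A)
    (hmax : ∀ J ⊆ A, #J = #I → ∑ j ∈ J, w j ≤ ∑ i ∈ I, w i) :
    #I * ∑ i ∈ A, w i ≤ #A * ∑ i ∈ I, w i := by
  have h : ∑ j ∈ A \ I, (#I : ℝ) * w j ≤ ∑ _j ∈ A \ I, ∑ i ∈ I, w i :=
    sum_le_sum fun j hj =>
      card_mul_le_sum_of_forall_sum_le hIA hmax (mem_sdiff.1 hj).1 (mem_sdiff.1 hj).2
  rw [← mul_sum, sum_const, nsmul_eq_mul, card_sdiff_of_subset hIA,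
    Nat.cast_sub (card_le_card hIA)] at h
  rw [← sum_sdiff hIA]
  linarith

end Exchange

section SumLargest

variable {ι : Type*} [Fintype ι] {w : ι → ℝ} {m : ℕ}

lemma sum_le_sumLargest (w : ι → ℝ) {I : Finset ι} (hI : #I = m) :
    ∑ i ∈ I, w i ≤ sumLargest w m :=
  le_csSup ((Set.toFinite _).image _).bddAbove ⟨I, hI, rfl⟩

lemma exists_sum_eq_sumLargest (w : ι → ℝ) (hm : m ≤ card ι) :
    ∃ I : Finset ι, #I = m ∧ ∑ i ∈ I, w i = sumLargest w m := by
  obtain ⟨I₀, -, hI₀⟩ := exists_subset_card_eq (s := univ) (by simpa using hm)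
  have hne : ((fun I : Finset ι => ∑ i ∈ I, w i) '' {I | #I = m}).Nonempty :=
    ⟨_, I₀, hI₀, rfl⟩
  exact hne.csSup_mem ((Set.toFinite _).image _)

lemma sumLargest_nonneg (hw : 0 ≤ w) : 0 ≤ sumLargest w m :=
  Real.sSup_nonneg (by rintro _ ⟨I, -, rfl⟩; exact sum_nonneg fun i _ => hw i)

lemma sum_le_sumLargest_of_card_le (hw : 0 ≤ w) {A : Finset ι} (hA : #A ≤ m)
    (hm : m ≤ card ι) : ∑ i ∈ A, w i ≤ sumLargest w m := by
  obtain ⟨B, hAB, hB⟩ := exists_superset_card_eq hA hm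
  exact (sum_le_sum_of_subset_of_nonneg hAB fun i _ _ => hw i).trans (sum_le_sumLargest w hB)

lemma mul_sum_le_card_mul_sumLargest {A : Finset ι} (hmA : m ≤ #A) :
    m * ∑ i ∈ A, w i ≤ #A * sumLargest w m := by
  obtain ⟨I, hI, hmax⟩ := exists_max_image (A.powersetCard m) (fun I => ∑ i ∈ I, w i)
    (powersetCard_nonempty.2 hmA)
  obtain ⟨hIA, hIm⟩ := mem_powersetCard.1 hI
  have h := card_mul_sum_le_of_forall_sum_le hIA
    fun J hJ hJI => hmax J (mem_powersetCard.2 ⟨hJ, hJI.trans hIm⟩)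
  rw [hIm] at h
  exact h.trans (mul_le_mul_of_nonneg_left (sum_le_sumLargest w hIm) (Nat.cast_nonneg _))

lemma mul_sum_le_card_add_mul_sumLargest (hw : 0 ≤ w) (hm : m ≤ card ι) (A : Finset ι) :
    m * ∑ i ∈ A, w i ≤ (#A + m) * sumLargest w m := by
  have hX := sumLargest_nonneg hw (m := m)
  rcases le_total #A m with hAm | hmA
  · have := sum_le_sumLargest_of_card_le hw hAm hm
    nlinarith [(Nat.cast_nonneg (#A) : (0 : ℝ) ≤ #A), (Nat.cast_nonneg m : (0 : ℝ) ≤ m)]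
  · have := mul_sum_le_card_mul_sumLargest (w := w) hmA
    nlinarith [(Nat.cast_nonneg m : (0 : ℝ) ≤ m)]

lemma sumLargest_le_sum_add (hw : 0 ≤ w) (hm : m ≤ card ι) {A : Finset ι} {t : ℝ} (ht : 0 ≤ t)
    (hA : ∀ i ∉ A, w i ≤ t) : sumLargest w m ≤ ∑ i ∈ A, w i + m * t := by
  obtain ⟨I, hI, hIw⟩ := exists_sum_eq_sumLargest w hm
  rw [← hIw, ← sum_filter_add_sum_filter_not I (· ∈ A)]
  have hin : ∑ i ∈ I with i ∈ A, w i ≤ ∑ i ∈ A, w i :=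
    sum_le_sum_of_subset_of_nonneg (fun i hi => (mem_filter.1 hi).2) fun i _ _ => hw i
  have hout : ∑ i ∈ I with i ∉ A, w i ≤ m * t :=
    calc ∑ i ∈ I with i ∉ A, w i ≤ ∑ i ∈ I with i ∉ A, t :=
          sum_le_sum fun i hi => hA i (mem_filter.1 hi).2
      _ = #{i ∈ I | i ∉ A} * t := by rw [sum_const, nsmul_eq_mul]
      _ ≤ m * t := by gcongr; exact hI ▸ card_filter_le I _
  linarith

lemma card_mul_le_sumLargest_of_notMem {I : Finset ι} (hI : #I = m)
    (hIw : ∑ i ∈ I, w i = sumLargest w m) {j : ι} (hj : j ∉ I) : m * w j ≤ sumLargest w m := by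
  have h := card_mul_le_sum_of_forall_sum_le (subset_univ I)
    (fun J _ hJ => hIw ▸ sum_le_sumLargest w (hJ.trans hI)) (mem_univ j) hj
  rwa [hI, hIw] at h

end SumLargest

namespace Equiv.Perm

lemma card_filter_apply_eq_eq {α : Type*} [DecidableEq α] {s : Finset (Perm α)} {b b' : α}
    (hs : ∀ σ ∈ s, swap b b' * σ ∈ s) (a : α) :
    #{σ ∈ s | σ a = b} = #{σ ∈ s | σ a = b'} := by
  refine card_nbij' (swap b b' * ·) (swap b b' * ·) ?_ ?_ ?_ ?_
  · intro σ hσ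
    simp only [coe_filter, Set.mem_ofPred_eq] at hσ ⊢
    exact ⟨hs σ hσ.1, by rw [mul_apply, hσ.2, swap_apply_left]⟩
  · intro σ hσ
    simp only [coe_filter, Set.mem_ofPred_eq] at hσ ⊢
    exact ⟨hs σ hσ.1, by rw [mul_apply, hσ.2, swap_apply_right]⟩
  · intro σ _
    simp [← mul_assoc]
  · intro σ _
    simp [← mul_assoc]

variable {α : Type*} [Fintype α] [DecidableEq α]

lemma card_apply_eq (a b : α) : #{σ : Perm α | σ a = b} = (card α - 1)! := by
  have hfib (c : α) : #{σ : Perm α | σ a = c} = #{σ : Perm α | σ a = b} :=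
    card_filter_apply_eq_eq (fun σ _ => mem_univ _) a
  have h := card_eq_sum_card_fiberwise (s := univ) (t := univ) (f := fun σ : Perm α => σ a)
    fun σ _ => mem_univ _
  simp only [hfib, sum_const, card_univ, Fintype.card_perm, smul_eq_mul] at h
  have hpos : 0 < card α := card_pos_iff.2 ⟨a⟩
  rw [← Nat.mul_factorial_pred hpos.ne'] at h
  exact (Nat.eq_of_mul_eq_mul_left hpos h).symm

lemma card_apply_eq_and_apply_eq_mul {a a' b b' : α} (ha : a ≠ a') (hb : b ≠ b') :
    #{σ : Perm α | σ a = b ∧ σ a' = b'} * (card α - 1) = (card α - 1)! := by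
  have hfib : ∀ c ∈ univ.erase b,
      #{σ ∈ ({σ | σ a = b} : Finset (Perm α)) | σ a' = c} = #{σ : Perm α | σ a = b ∧ σ a' = b'} := by
    intro c hc
    rw [card_filter_apply_eq_eq (b' := b') ?_ a', filter_filter]
    intro σ hσ
    simp only [mem_filter, mem_univ, true_and] at hσ ⊢
    rw [mul_apply, hσ, swap_apply_of_ne_of_ne (ne_of_mem_erase hc).symm hb]
  have h := card_eq_sum_card_fiberwise (s := ({σ | σ a = b} : Finset (Perm α)))
    (t := univ.erase b) (f := fun σ => σ a') ?_
  · rw [sum_congr rfl hfib, sum_const, card_erase_of_mem (mem_univ b), card_univ, smul_eq_mul,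
      card_apply_eq] at h
    rw [h, mul_comm]
  · intro σ hσ
    simp only [coe_filter, mem_univ, true_and, Set.mem_ofPred_eq, coe_erase, coe_univ,
      Set.mem_sdiff, Set.mem_singleton_iff] at hσ ⊢
    exact ⟨trivial, fun h => ha (σ.injective (hσ.trans h.symm))⟩

lemma card_mul_card_apply_eq_and_apply_eq_le {p q : α × α} (hpq : p ≠ q) :
    card α * #{σ : Perm α | σ p.1 = p.2 ∧ σ q.1 = q.2} ≤ 2 * (card α - 1)! := by
  by_cases h : p.1 ≠ q.1 ∧ p.2 ≠ q.2
  · have h2 : 1 < card α := one_lt_card_iff.2 ⟨p.1, q.1, h.1⟩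
    rw [← card_apply_eq_and_apply_eq_mul h.1 h.2]
    obtain ⟨k, hk⟩ := Nat.exists_eq_add_of_lt h2
    rw [hk, show 1 + k + 1 - 1 = k + 1 by omega]
    nlinarith
  · rw [card_eq_zero.2, mul_zero]
    · exact Nat.zero_le _
    refine filter_eq_empty_iff.2 fun σ _ ⟨h1, h2⟩ => hpq ?_
    have hiff : p.1 = q.1 ↔ p.2 = q.2 := by rw [← h1, ← h2, σ.injective.eq_iff]
    rw [not_and_or, not_not, not_not] at h
    rcases h with h | h
    · exact Prod.ext h (hiff.1 h)
    · exact Prod.ext (hiff.2 h) h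

end Equiv.Perm

section Diagonal

variable {α : Type*} [Fintype α] [DecidableEq α]

def diagHits (T : Finset (α × α)) (σ : Perm α) : Finset α := {i | (i, σ i) ∈ T}

variable (T : Finset (α × α))

lemma sum_diagHits (f : α × α → ℝ) (σ : Perm α) :
    ∑ i ∈ diagHits T σ, f (i, σ i) = ∑ p ∈ T, if σ p.1 = p.2 then f p else 0 := by
  rw [← sum_filter]
  refine sum_nbij' (fun i => (i, σ i)) Prod.fst ?_ ?_ ?_ ?_ fun _ _ => rfl
  · intro i hi
    simpa [diagHits] using hi
  · rintro ⟨i, j⟩ hp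
    obtain ⟨hT, hj : σ i = j⟩ := mem_filter.1 hp
    subst hj
    simpa [diagHits] using hT
  · intro i _
    rfl
  · rintro ⟨i, j⟩ hp
    obtain ⟨-, hj : σ i = j⟩ := mem_filter.1 hp
    subst hj
    rfl

lemma card_diagHits (σ : Perm α) :
    (#(diagHits T σ) : ℝ) = ∑ p ∈ T, if σ p.1 = p.2 then 1 else 0 := by
  simpa using sum_diagHits T (fun _ => 1) σ

lemma sum_perm_sum_diagHits (f : α × α → ℝ) :
    ∑ σ : Perm α, ∑ i ∈ diagHits T σ, f (i, σ i) = (card α - 1)! * ∑ p ∈ T, f p := by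
  simp_rw [sum_diagHits]
  rw [sum_comm, mul_sum]
  refine sum_congr rfl fun p _ => ?_
  rw [← sum_filter, sum_const, Perm.card_apply_eq, nsmul_eq_mul]

lemma card_mul_sum_perm_sum_diagHits_mul_card_le {f : α × α → ℝ} (hf : 0 ≤ f) :
    card α * ∑ σ : Perm α, (∑ i ∈ diagHits T σ, f (i, σ i)) * #(diagHits T σ)
      ≤ (card α + 2 * #T) * (card α - 1)! * ∑ p ∈ T, f p := by
  set N : α × α → α × α → ℕ := fun p q => #{σ : Perm α | σ p.1 = p.2 ∧ σ q.1 = q.2}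
  have hexpand : ∑ σ : Perm α, (∑ i ∈ diagHits T σ, f (i, σ i)) * #(diagHits T σ)
      = ∑ p ∈ T, f p * ∑ q ∈ T, (N p q : ℝ) := by
    simp_rw [sum_diagHits, card_diagHits, Finset.sum_mul_sum]
    rw [sum_comm]
    refine sum_congr rfl fun p _ => ?_
    rw [sum_comm, mul_sum]
    refine sum_congr rfl fun q _ => ?_
    simp_rw [ite_zero_mul_ite_zero, mul_one]
    rw [← sum_filter, sum_const, nsmul_eq_mul, mul_comm]
  have hrow : ∀ p ∈ T, card α * ∑ q ∈ T, (N p q : ℝ) ≤ (card α + 2 * #T) * (card α - 1)! := by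
    intro p hp
    have hpp : N p p = (card α - 1)! := by
      simp only [N, and_self]
      exact Perm.card_apply_eq _ _
    have hoff : ∀ q ∈ T.erase p, (card α : ℝ) * N p q ≤ 2 * (card α - 1)! := fun q hq => by
      exact_mod_cast Perm.card_mul_card_apply_eq_and_apply_eq_le (ne_of_mem_erase hq).symm
    have hcard : (#(T.erase p) : ℝ) ≤ #T := by exact_mod_cast card_erase_le
    rw [← add_sum_erase T _ hp, mul_add, mul_sum, hpp]
    calc (card α : ℝ) * (card α - 1)! + ∑ q ∈ T.erase p, (card α : ℝ) * N p q
        ≤ card α * (card α - 1)! + ∑ _q ∈ T.erase p, 2 * ((card α - 1)! : ℝ) := by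
          grw [sum_le_sum hoff]
      _ ≤ (card α + 2 * #T) * (card α - 1)! := by
          rw [sum_const, nsmul_eq_mul]
          nlinarith [(Nat.cast_nonneg _ : (0 : ℝ) ≤ (card α - 1)!)]
  calc (card α : ℝ) * ∑ σ : Perm α, (∑ i ∈ diagHits T σ, f (i, σ i)) * #(diagHits T σ)
      = ∑ p ∈ T, f p * (card α * ∑ q ∈ T, (N p q : ℝ)) := by
        rw [hexpand, mul_sum]
        exact sum_congr rfl fun p _ => mul_left_comm _ _ _
    _ ≤ ∑ p ∈ T, f p * ((card α + 2 * #T) * (card α - 1)!) :=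
        sum_le_sum fun p hp => mul_le_mul_of_nonneg_left (hrow p hp) (hf p)
    _ = (card α + 2 * #T) * (card α - 1)! * ∑ p ∈ T, f p := by
        rw [← sum_mul, mul_comm]

end Diagonal

section Average

variable {α : Type*} [Fintype α] [DecidableEq α] {v : α × α → ℝ} {m : ℕ}

lemma sum_perm_sumLargest_diag_le (hv : 0 ≤ v) (hm₀ : 0 < m) (hm : m ≤ card α) :
    ∑ σ : Perm α, sumLargest (fun i => v (i, σ i)) m
      ≤ 2 * (card α - 1)! * sumLargest v (card α * m) := by
  set n := card α
  obtain ⟨T, hT, hTv⟩ := exists_sum_eq_sumLargest v (m := n * m)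
    (by rw [card_prod]; exact Nat.mul_le_mul_left n hm)
  set S := sumLargest v (n * m)
  have hn : 0 < n := hm₀.trans_le hm
  have hS : 0 ≤ S := sumLargest_nonneg hv
  have hsmall : ∀ q ∉ T, v q ≤ S / (n * m) := fun q hq => by
    rw [le_div_iff₀ (by positivity), mul_comm]
    exact_mod_cast card_mul_le_sumLargest_of_notMem hT hTv hq
  have hdiag (σ : Perm α) :
      sumLargest (fun i => v (i, σ i)) m ≤ ∑ i ∈ diagHits T σ, v (i, σ i) + S / n := by
    have h := sumLargest_le_sum_add (w := fun i => v (i, σ i)) (fun i => hv _) hm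
      (A := diagHits T σ) (by positivity)
      fun i hi => hsmall _ (by simpa [diagHits] using hi)
    rwa [show (m : ℝ) * (S / (n * m)) = S / n by field_simp] at h
  calc ∑ σ : Perm α, sumLargest (fun i => v (i, σ i)) m
      ≤ ∑ σ : Perm α, (∑ i ∈ diagHits T σ, v (i, σ i) + S / n) := sum_le_sum fun σ _ => hdiag σ
    _ = (n - 1)! * S + n ! * (S / n) := by
        rw [sum_add_distrib, sum_perm_sum_diagHits, hTv, sum_const, card_univ, card_perm,
          nsmul_eq_mul]
    _ = 2 * (n - 1)! * S := by
        rw [← Nat.mul_factorial_pred hn.ne']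
        push_cast
        field_simp
        ring

lemma le_sum_perm_sumLargest_diag (hv : 0 ≤ v) (hm₀ : 0 < m) (hm : m ≤ card α) :
    (card α - 1)! * sumLargest v (card α * m)
      ≤ 4 * ∑ σ : Perm α, sumLargest (fun i => v (i, σ i)) m := by
  obtain ⟨T, hT, hTv⟩ := exists_sum_eq_sumLargest v (m := card α * m)
    (by rw [card_prod]; exact Nat.mul_le_mul_left _ hm)
  set S := sumLargest v (card α * m)
  set F : ℝ := (((card α - 1)! : ℕ) : ℝ)
  set a : Perm α → ℝ := fun σ => ∑ i ∈ diagHits T σ, v (i, σ i)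
  have hn : (0 : ℝ) < card α := by exact_mod_cast hm₀.trans_le hm
  have hm1 : (1 : ℝ) ≤ m := by exact_mod_cast hm₀
  have hFS : 0 ≤ F * S := mul_nonneg (Nat.cast_nonneg _) (sumLargest_nonneg hv)
  have hper (σ : Perm α) :
      8 * m * a σ ≤ a σ * #(diagHits T σ) + m * a σ
        + 16 * m * sumLargest (fun i => v (i, σ i)) m := by
    set u : ℝ := #(diagHits T σ) + m
    have ha : 0 ≤ a σ := sum_nonneg fun i _ => hv _
    have hu : 0 < u := by positivity
    have h := mul_sum_le_card_add_mul_sumLargest (fun i => hv (i, σ i)) hm (diagHits T σ)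
    -- `8 m a u ≤ a u² + 16 m² a ≤ a u² + 16 m u X`, the first step being `a (u - 4m)² ≥ 0`
    refine le_of_mul_le_mul_left ?_ hu
    nlinarith [mul_nonneg ha (sq_nonneg (u - 4 * m))]
  have hfirst : ∑ σ : Perm α, a σ = F * S := by rw [sum_perm_sum_diagHits, hTv]
  have hsecond : ∑ σ : Perm α, a σ * #(diagHits T σ) ≤ (1 + 2 * m) * (F * S) := by
    have h := card_mul_sum_perm_sum_diagHits_mul_card_le T hv
    rw [hTv, hT] at h
    push_cast at h
    refine le_of_mul_le_mul_left (h.trans_eq ?_) hn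
    ring
  have hsum := sum_le_sum fun σ (_ : σ ∈ univ) => hper σ
  simp only [← mul_sum, sum_add_distrib, hfirst] at hsum
  refine le_of_mul_le_mul_left ?_ (by positivity : (0 : ℝ) < m)
  nlinarith

end Average

theorem theorem27_Xm : ∃ c : ℝ, 0 < c ∧
    ∀ (n m : ℕ), 1 ≤ m → m ≤ n → ∀ x : Fin n → Fin n → ℝ,
      (c⁻¹ * ((1 / (n : ℝ)) * sumLargest (fun p : Fin n × Fin n => |x p.1 p.2|) (n * m))
          ≤ (1 / (Nat.factorial n : ℝ)) *
              ∑ π : Equiv.Perm (Fin n), sumLargest (fun i => |x i (π i)|) m) ∧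
      ((1 / (Nat.factorial n : ℝ)) *
            ∑ π : Equiv.Perm (Fin n), sumLargest (fun i => |x i (π i)|) m
          ≤ c * ((1 / (n : ℝ)) * sumLargest (fun p : Fin n × Fin n => |x p.1 p.2|) (n * m))) := by
  refine ⟨4, by norm_num, fun n m hm hmn x => ?_⟩
  have hv : 0 ≤ fun p : Fin n × Fin n => |x p.1 p.2| := fun p => abs_nonneg _
  have hlow := le_sum_perm_sumLargest_diag hv hm (by simpa using hmn)
  have hup := sum_perm_sumLargest_diag_le hv hm (by simpa using hmn)
  simp only [Fintype.card_fin] at hlow hup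
  have hn : (0 : ℝ) < n := by exact_mod_cast hm.trans hmn
  have hF : (0 : ℝ) < (n - 1)! := by exact_mod_cast (n - 1).factorial_pos
  have hS := sumLargest_nonneg hv (m := n * m)
  rw [← Nat.mul_factorial_pred (by omega), Nat.cast_mul]
  constructor
  · field_simp
    linarith
  · field_simp
    nlinarith
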